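/- For two one-qubit channels Ψ, Φ with affine parametrizations (κ_Ψ, η_Ψ) and (κ_Φ, η_Φ) (real 3-vectors of translation and distortion parameters), the superfidelity between their Jamiołkowski states equals (1/4)·(1 + κ_Ψ·κ_Φ + η_Ψ·η_Φ + √(3 - ‖κ_Ψ‖² - ‖η_Ψ‖²)·√(3 - ‖κ_Φ‖² - ‖η_Φ‖²)). -/

import Mathlib

open Matrix ComplexOrder

noncomputable def sG {N : ℕ} (ρ σ : Matrix (Fin N) (Fin N) ℂ) : ℝ :=
  (trace (ρ * σ)).re +
    Real.sqrt (1 - (trace (ρ * ρ)).re) * Real.sqrt (1 - (trace (σ * σ)).re)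

/-- Jamiołkowski state (half the dynamical matrix) of a one-qubit channel in
the affine parametrization by distortion κ and translation η. -/
noncomputable def qubitJam (κx κy κz ηx ηy ηz : ℝ) : Matrix (Fin 4) (Fin 4) ℂ :=
  ((1 : ℂ) / 4) •
    !![(ηz : ℂ) + κz + 1, 0, (κx : ℂ) + Complex.I * κy, (ηx : ℂ) + ηy;
       0, -(ηz : ℂ) + κz + 1, (ηx : ℂ) - ηy, (κx : ℂ) + Complex.I * κy;
       (κx : ℂ) - Complex.I * κy, (ηx : ℂ) - ηy, -(ηz : ℂ) - κz + 1, 0;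
       (ηx : ℂ) + ηy, (κx : ℂ) - Complex.I * κy, 0, (ηz : ℂ) - κz + 1]

/-! The Jamiołkowski state is `(1/4)(I + Σ κᵢ Aᵢ + Σ ηᵢ Bᵢ)` for six traceless Hermitian
matrices `Aᵢ, Bᵢ` that, together with `I`, are orthogonal of squared norm `4` for the trace
form. Hence `tr ρσ = (1 + κ·κ' + η·η')/4`, the linear entropy `1 - tr ρ²` is
`(3 - ‖κ‖² - ‖η‖²)/4`, and the superfidelity formula follows by `√(x/4) = √x/2`. -/

theorem re_trace_qubitJam_mul (κx κy κz ηx ηy ηz κx' κy' κz' ηx' ηy' ηz' : ℝ) :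
    (trace (qubitJam κx κy κz ηx ηy ηz * qubitJam κx' κy' κz' ηx' ηy' ηz')).re =
      (1 + (κx * κx' + κy * κy' + κz * κz') + (ηx * ηx' + ηy * ηy' + ηz * ηz')) / 4 := by
  simp only [qubitJam, trace, diag, mul_apply, Fin.sum_univ_four, Matrix.smul_apply, smul_eq_mul,
    of_apply, cons_val', cons_val_zero, cons_val_one, cons_val_two, cons_val_three, head_cons,
    tail_cons, empty_val', cons_val_fin_one, head_fin_const]
  simp only [Complex.add_re, Complex.mul_re, Complex.sub_re, Complex.neg_re, Complex.mul_im,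
    Complex.add_im, Complex.sub_im, Complex.neg_im, Complex.ofReal_re, Complex.ofReal_im,
    Complex.I_re, Complex.I_im, Complex.one_re, Complex.one_im, Complex.zero_re, Complex.zero_im,
    Complex.div_ofNat_re, Complex.div_ofNat_im]
  ring

theorem one_sub_re_trace_qubitJam_mul_self (κx κy κz ηx ηy ηz : ℝ) :
    1 - (trace (qubitJam κx κy κz ηx ηy ηz * qubitJam κx κy κz ηx ηy ηz)).re =
      (3 - (κx ^ 2 + κy ^ 2 + κz ^ 2) - (ηx ^ 2 + ηy ^ 2 + ηz ^ 2)) / 4 := by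
  rw [re_trace_qubitJam_mul]
  ring

theorem superfidelity_one_qubit_channels
    (κxΨ κyΨ κzΨ ηxΨ ηyΨ ηzΨ κxΦ κyΦ κzΦ ηxΦ ηyΦ ηzΦ : ℝ) :
    sG (qubitJam κxΨ κyΨ κzΨ ηxΨ ηyΨ ηzΨ) (qubitJam κxΦ κyΦ κzΦ ηxΦ ηyΦ ηzΦ) =
      (1 / 4) * (1 + (κxΨ * κxΦ + κyΨ * κyΦ + κzΨ * κzΦ)
        + (ηxΨ * ηxΦ + ηyΨ * ηyΦ + ηzΨ * ηzΦ)
        + Real.sqrt (3 - (κxΨ ^ 2 + κyΨ ^ 2 + κzΨ ^ 2) - (ηxΨ ^ 2 + ηyΨ ^ 2 + ηzΨ ^ 2)) *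
          Real.sqrt (3 - (κxΦ ^ 2 + κyΦ ^ 2 + κzΦ ^ 2) - (ηxΦ ^ 2 + ηyΦ ^ 2 + ηzΦ ^ 2))) := by
  have sqrt_four : Real.sqrt 4 = 2 := by
    rw [show (4 : ℝ) = 2 ^ 2 by norm_num, Real.sqrt_sq zero_le_two]
  rw [sG, re_trace_qubitJam_mul, one_sub_re_trace_qubitJam_mul_self,
    one_sub_re_trace_qubitJam_mul_self, Real.sqrt_div' _ zero_le_four,
    Real.sqrt_div' _ zero_le_four, sqrt_four]
  ring
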